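/- Cauchy integral operator at the identity map on the unit circle. Let w ∈ ℂ with |w| = 1 and let m ∈ ℕ with m ≥ 2. Then (1/(2πi)) ∮_{|τ|=1} ((conj(τ) − conj(w))/(τ − w)) dτ = −conj(w), and moreover −((m−1)/(2πi)) ∮_{|τ|=1} ((conj(τ) − conj(w))/((τ − w)·τ^m)) dτ − (1/(2πi)) ∮_{|τ|=1} ((conj(τ) − conj(w))(conj(τ)^{m−1} − conj(w)^{m−1})/(τ − w)²) dτ = 0. -/

import Mathlib

open ComplexConjugate

noncomputable section

open Complex Set Finset

/-- conjugation on the unit circle is inversion. -/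
lemma conj_eq_inv_of_norm_one {z : ℂ} (hz : ‖z‖ = 1) : conj z = z⁻¹ := by
  have h : conj z * z = 1 := by
    rw [mul_comm, Complex.mul_conj]
    norm_cast
    rw [Complex.normSq_eq_norm_sq, hz]; norm_num
  exact eq_inv_of_mul_eq_one_left h

/-- Circle integrals agree if the integrands agree on the circle off one point. -/
lemma circleIntegral_congr_off_point {f g : ℂ → ℂ} (w : ℂ)
    (h : ∀ τ : ℂ, ‖τ‖ = 1 → τ ≠ w → f τ = g τ) :
    (∮ τ in C(0, 1), f τ) = ∮ τ in C(0, 1), g τ := by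
  have hc : (circleMap 0 1 ⁻¹' {w}).Countable :=
    (Set.countable_singleton _).preimage_circleMap 0 one_ne_zero
  rw [circleIntegral, circleIntegral]
  refine intervalIntegral.integral_congr_ae ((hc.ae_notMem _).mono fun θ hθ _ => ?_)
  have hθ' : circleMap 0 1 θ ≠ w := by simpa using hθ
  have hn : ‖circleMap 0 1 θ‖ = 1 := by
    simp
  rw [h _ hn hθ']

lemma circleIntegral_finset_sum {ι : Type*} (s : Finset ι) (f : ι → ℂ → ℂ)
    (h : ∀ i ∈ s, CircleIntegrable (f i) 0 1) :
    (∮ τ in C(0, 1), ∑ i ∈ s, f i τ) = ∑ i ∈ s, ∮ τ in C(0, 1), f i τ := by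
  simp only [circleIntegral, Finset.smul_sum]
  exact intervalIntegral.integral_finset_sum fun i hi => (h i hi).out

/-- The constant `2πi`. -/
def twoPiI : ℂ := ((2 * Real.pi : ℝ) : ℂ) * Complex.I

lemma twoPiI_ne_zero : twoPiI ≠ 0 := by
  simp [twoPiI, Real.pi_ne_zero, Complex.I_ne_zero]

/-- **Cauchy integral operator at the identity map on the unit circle**:
the evaluations `𝒞(w)(conj w) = −conj w` and
`D𝒞(w)[conj(w)^{m−1}](conj w) = 0`. -/
theorem cauchy_operator_identity_evaluations (w : ℂ) (hw : ‖w‖ = 1)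
    (m : ℕ) (hm : 2 ≤ m) :
    (1 / twoPiI) * (∮ τ in C(0, 1), (conj τ - conj w) / (τ - w)) = -conj w ∧
    -(((m : ℂ) - 1) / twoPiI) *
        (∮ τ in C(0, 1), (conj τ - conj w) / ((τ - w) * τ ^ m)) -
      (1 / twoPiI) *
        (∮ τ in C(0, 1),
          (conj τ - conj w) * (conj τ ^ (m - 1) - conj w ^ (m - 1)) / (τ - w) ^ 2) = 0 := by
  have hw0 : w ≠ 0 := by intro h; rw [h] at hw; simp at hw
  have hcw : conj w = w⁻¹ := conj_eq_inv_of_norm_one hw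
  obtain ⟨n, rfl⟩ : ∃ n, m = n + 2 := ⟨m - 2, by omega⟩
  constructor
  · -- first identity
    have h1 : (∮ τ in C(0, 1), (conj τ - conj w) / (τ - w))
        = ∮ τ in C(0, 1), -w⁻¹ * (τ - 0)⁻¹ := by
      apply circleIntegral_congr_off_point w
      intro τ hτ hτw
      have hτ0 : τ ≠ 0 := by intro h; rw [h] at hτ; simp at hτ
      have hτw' : τ - w ≠ 0 := sub_ne_zero.mpr hτw
      rw [conj_eq_inv_of_norm_one hτ, hcw, sub_zero]
      field_simp
      ring
    rw [h1, circleIntegral.integral_const_mul, circleIntegral.integral_sub_center_inv 0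
      (one_ne_zero : (1 : ℝ) ≠ 0)]
    have h2pi : ((2 : ℂ) * ↑Real.pi * Complex.I) = twoPiI := by
      simp [twoPiI]
    rw [h2pi, hcw]
    field_simp [twoPiI_ne_zero]
  · -- second identity: both integrals vanish
    have h2 : (∮ τ in C(0, 1), (conj τ - conj w) / ((τ - w) * τ ^ (n + 2))) = 0 := by
      have h2' : (∮ τ in C(0, 1), (conj τ - conj w) / ((τ - w) * τ ^ (n + 2)))
          = ∮ τ in C(0, 1), -w⁻¹ * (τ - 0) ^ (-(n + 3 : ℤ)) := by
        apply circleIntegral_congr_off_point w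
        intro τ hτ hτw
        have hτ0 : τ ≠ 0 := by intro h; rw [h] at hτ; simp at hτ
        have hτw' : τ - w ≠ 0 := sub_ne_zero.mpr hτw
        rw [conj_eq_inv_of_norm_one hτ, hcw, sub_zero, zpow_neg]
        have : ((n + 3 : ℤ)) = ((n + 3 : ℕ) : ℤ) := by push_cast; ring
        rw [this, zpow_natCast]
        field_simp
        ring
      rw [h2', circleIntegral.integral_const_mul,
        circleIntegral.integral_sub_zpow_of_ne (by omega) 0 0 1, mul_zero]
    have h3 : (∮ τ in C(0, 1),
        (conj τ - conj w) * (conj τ ^ (n + 2 - 1) - conj w ^ (n + 2 - 1)) / (τ - w) ^ 2) = 0 := by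
      have h3' : (∮ τ in C(0, 1),
          (conj τ - conj w) * (conj τ ^ (n + 2 - 1) - conj w ^ (n + 2 - 1)) / (τ - w) ^ 2)
          = ∮ τ in C(0, 1), ∑ k ∈ Finset.range (n + 1),
              (w ^ (k + 2))⁻¹ * (τ - 0) ^ ((k : ℤ) - (n + 2)) := by
        apply circleIntegral_congr_off_point w
        intro τ hτ hτw
        have hτ0 : τ ≠ 0 := by intro h; rw [h] at hτ; simp at hτ
        have hτw' : τ - w ≠ 0 := sub_ne_zero.mpr hτw
        rw [conj_eq_inv_of_norm_one hτ, hcw]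
        have hgeo : (∑ i ∈ Finset.range (n + 1), τ ^ i * w ^ (n + 1 - 1 - i)) * (τ - w)
            = τ ^ (n + 1) - w ^ (n + 1) := geom_sum₂_mul τ w (n + 1)
        have e1 : τ⁻¹ - w⁻¹ = -(τ - w) * (τ * w)⁻¹ := by
          field_simp
          ring
        have e2 : (τ⁻¹) ^ (n + 1) - (w⁻¹) ^ (n + 1)
            = -(τ ^ (n + 1) - w ^ (n + 1)) * (τ ^ (n + 1) * w ^ (n + 1))⁻¹ := by
          rw [inv_pow, inv_pow]
          field_simp
          ring
        have step1 : (τ⁻¹ - w⁻¹) * ((τ⁻¹) ^ (n + 2 - 1) - (w⁻¹) ^ (n + 2 - 1)) / (τ - w) ^ 2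
            = (τ ^ (n + 1) - w ^ (n + 1)) / ((τ - w) * τ ^ (n + 2) * w ^ (n + 2)) := by
          show (τ⁻¹ - w⁻¹) * ((τ⁻¹) ^ (n + 1) - (w⁻¹) ^ (n + 1)) / (τ - w) ^ 2 = _
          rw [e1, e2, div_eq_div_iff (pow_ne_zero 2 hτw')
            (mul_ne_zero (mul_ne_zero hτw' (pow_ne_zero _ hτ0)) (pow_ne_zero _ hw0))]
          field_simp
          ring
        rw [step1, ← hgeo]
        rw [Finset.sum_mul, Finset.sum_div]
        apply Finset.sum_congr rfl
        intro k hk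
        have hkn : k ≤ n := by simpa using Nat.lt_succ_iff.mp (Finset.mem_range.mp hk)
        have hzpow : (τ - 0) ^ ((k : ℤ) - (n + 2)) = τ ^ k / τ ^ (n + 2) := by
          rw [sub_zero, zpow_sub₀ hτ0, zpow_natCast]
          norm_cast
        have hmulpow : w ^ (n - k) * w ^ (k + 2) = w ^ (n + 2) := by
          rw [← pow_add]
          congr 1
          omega
        rw [hzpow]
        field_simp
        rw [show n + 1 - 1 - k = n - k by omega]
        linear_combination hmulpow
      rw [h3']
      rw [circleIntegral_finset_sum]
      · apply Finset.sum_eq_zero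
        intro k hk
        rw [circleIntegral.integral_const_mul,
          circleIntegral.integral_sub_zpow_of_ne ?_ 0 0 1, mul_zero]
        have : k ≤ n := by simpa using Nat.lt_succ_iff.mp (Finset.mem_range.mp hk)
        omega
      · intro k hk
        have hint : CircleIntegrable (fun τ : ℂ => (τ - 0) ^ ((k : ℤ) - (n + 2))) 0 1 := by
          rw [circleIntegrable_sub_zpow_iff]
          right; right
          simp
        exact IntervalIntegrable.const_mul hint _
    rw [h2, h3, mul_zero, mul_zero, sub_zero]
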